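/- Let φ : E → E be the F-algebra endomorphism determined by φ(e_i) = ε_i·e_i + w_i for all i ≥ 1. Then φ∘φ = id on E; in particular φ is an F-algebra automorphism of E of order two. -/

import Mathlib

/-- `E F` is the Grassmann (exterior) algebra of the infinite-dimensional `F`-vector
space which is free on the index set `{n : ℕ // 1 ≤ n}` of the generators `e₁, e₂, …`. -/
noncomputable abbrev E (F : Type) [Field F] :=
  ExteriorAlgebra F ({n : ℕ // 1 ≤ n} →₀ F)

/-- The generators `e i` (for `i ≥ 1`) of the Grassmann algebra; junk value `0` at `i = 0`. -/
noncomputable def e (F : Type) [Field F] (i : ℕ) : E F :=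
  if h : 1 ≤ i then ExteriorAlgebra.ι F (Finsupp.single ⟨i, h⟩ 1) else 0

/-- `w n = e 1 * e 2 * ⋯ * e (2n+1)`. -/
noncomputable def w (F : Type) [Field F] (n : ℕ) : E F :=
  ((List.range' 1 (2 * n + 1)).map (e F)).prod

/-- The set `I = {2n ∈ ℕ : n > 1 and ∃ m, 2^m ≤ n < 2^m + 2^(m-1)}`. -/
def Iset : Set ℕ :=
  {N | ∃ n : ℕ, N = 2 * n ∧ 1 < n ∧ ∃ m : ℕ, 2 ^ m ≤ n ∧ n < 2 ^ m + 2 ^ (m - 1)}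

open Classical in
/-- The sequence `ε : ℕ → ℤ` with values in `{1, -1}`:
`ε (2n-1) = -1` if `2n ∈ I`, `ε (2n-1) = 1` if `2n ∉ I`, and `ε (2n) = 1` for all `n`. -/
noncomputable def eps (i : ℕ) : ℤ :=
  if Odd i ∧ (i + 1) ∈ Iset then -1 else 1


def Pp (n : ℕ) : Prop := ∃ m : ℕ, 2 ^ m ≤ n ∧ n < 2 ^ m + 2 ^ (m - 1)

open Classical in
noncomputable def epsAux (n : ℕ) : ℤ := if 1 < n ∧ Pp n then -1 else 1

lemma mem_Iset_iff (n : ℕ) : (2 * n) ∈ Iset ↔ 1 < n ∧ Pp n := by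
  constructor
  · rintro ⟨n', he, h1, h2⟩
    obtain rfl : n' = n := by omega
    exact ⟨h1, h2⟩
  · rintro ⟨h1, h2⟩
    exact ⟨n, rfl, h1, h2⟩

lemma eps_even (n : ℕ) : eps (2 * n) = 1 := by
  unfold eps
  rw [if_neg]
  rintro ⟨⟨k, hk⟩, -⟩
  omega

lemma eps_odd (n : ℕ) : eps (2 * n + 1) = epsAux (n + 1) := by
  unfold eps epsAux
  have he : 2 * n + 1 + 1 = 2 * (n + 1) := by ring
  rw [he]
  by_cases h : 1 < n + 1 ∧ Pp (n + 1)
  · rw [if_pos h, if_pos ⟨⟨n, by ring⟩, (mem_Iset_iff (n + 1)).2 h⟩]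
  · rw [if_neg h, if_neg]
    rintro ⟨-, hm⟩
    exact h ((mem_Iset_iff (n + 1)).1 hm)

lemma epsAux_sq (n : ℕ) : epsAux n * epsAux n = 1 := by
  unfold epsAux; split <;> norm_num

lemma eps_sq (i : ℕ) : eps i * eps i = 1 := by
  unfold eps; split <;> norm_num

lemma epsAux_one : epsAux 1 = 1 := by
  unfold epsAux; rw [if_neg]; rintro ⟨h, -⟩; omega

lemma epsAux_two : epsAux 2 = -1 := by
  unfold epsAux
  rw [if_pos ⟨by omega, 1, by norm_num⟩]

lemma Pp3 : ¬ Pp 3 := by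
  rintro ⟨m, h1, h2⟩
  match m with
  | 0 => norm_num at h1 h2
  | 1 => norm_num at h1 h2
  | (m + 2) =>
    have : 4 ≤ 2 ^ (m + 2) := by
      calc (4:ℕ) = 2 ^ 2 := by norm_num
      _ ≤ 2 ^ (m + 2) := Nat.pow_le_pow_right (by norm_num) (by omega)
    omega

lemma epsAux_three : epsAux 3 = 1 := by
  unfold epsAux; rw [if_neg]; rintro ⟨-, h⟩; exact Pp3 h

lemma Pp_even (n : ℕ) (hn : 2 ≤ n) : Pp (2 * n) ↔ Pp n := by
  constructor
  · rintro ⟨M, h1, h2⟩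
    match M with
    | 0 => norm_num at h1 h2; omega
    | 1 => norm_num at h1 h2; omega
    | (M + 2) =>
      have d1 : M + 2 - 1 = M + 1 := by omega
      have d2 : M + 1 - 1 = M := by omega
      have e1 : (2:ℕ) ^ (M + 1) = 2 * 2 ^ M := by ring
      have e2 : (2:ℕ) ^ (M + 2) = 4 * 2 ^ M := by ring
      rw [d1, e1, e2] at h2
      rw [e2] at h1
      exact ⟨M + 1, by rw [e1]; omega, by rw [d2, e1]; omega⟩
  · rintro ⟨m, h1, h2⟩
    match m with
    | 0 => norm_num at h1 h2; omega
    | (m + 1) =>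
      have d1 : m + 1 - 1 = m := by omega
      have d2 : m + 2 - 1 = m + 1 := by omega
      have e1 : (2:ℕ) ^ (m + 1) = 2 * 2 ^ m := by ring
      have e2 : (2:ℕ) ^ (m + 2) = 4 * 2 ^ m := by ring
      rw [d1, e1] at h2
      rw [e1] at h1
      exact ⟨m + 2, by rw [e2]; omega, by rw [d2, e1, e2]; omega⟩

lemma Pp_odd (n : ℕ) (hn : 2 ≤ n) : Pp (2 * n + 1) ↔ Pp n := by
  constructor
  · rintro ⟨M, h1, h2⟩
    match M with
    | 0 => norm_num at h1 h2; omega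
    | 1 => norm_num at h1 h2; omega
    | (M + 2) =>
      have d1 : M + 2 - 1 = M + 1 := by omega
      have d2 : M + 1 - 1 = M := by omega
      have e1 : (2:ℕ) ^ (M + 1) = 2 * 2 ^ M := by ring
      have e2 : (2:ℕ) ^ (M + 2) = 4 * 2 ^ M := by ring
      rw [d1, e1, e2] at h2
      rw [e2] at h1
      exact ⟨M + 1, by rw [e1]; omega, by rw [d2, e1]; omega⟩
  · rintro ⟨m, h1, h2⟩
    match m with
    | 0 => norm_num at h1 h2; omega
    | (m + 1) =>
      have d1 : m + 1 - 1 = m := by omega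
      have d2 : m + 2 - 1 = m + 1 := by omega
      have e1 : (2:ℕ) ^ (m + 1) = 2 * 2 ^ m := by ring
      have e2 : (2:ℕ) ^ (m + 2) = 4 * 2 ^ m := by ring
      rw [d1, e1] at h2
      rw [e1] at h1
      exact ⟨m + 2, by rw [e2]; omega, by rw [d2, e1, e2]; omega⟩

lemma epsAux_even (n : ℕ) (hn : 2 ≤ n) : epsAux (2 * n) = epsAux n := by
  unfold epsAux
  by_cases h : Pp n
  · rw [if_pos ⟨by omega, (Pp_even n hn).2 h⟩, if_pos ⟨by omega, h⟩]
  · rw [if_neg, if_neg]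
    · rintro ⟨-, h2⟩; exact h h2
    · rintro ⟨-, h2⟩; exact h ((Pp_even n hn).1 h2)

lemma epsAux_odd (n : ℕ) (hn : 2 ≤ n) : epsAux (2 * n + 1) = epsAux n := by
  unfold epsAux
  by_cases h : Pp n
  · rw [if_pos ⟨by omega, (Pp_odd n hn).2 h⟩, if_pos ⟨by omega, h⟩]
  · rw [if_neg, if_neg]
    · rintro ⟨-, h2⟩; exact h h2
    · rintro ⟨-, h2⟩; exact h ((Pp_odd n hn).1 h2)

noncomputable def sfun (k : ℕ) : ℤ := ((List.range k).map (fun m => epsAux (m + 1))).prod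

noncomputable def Sp (k : ℕ) : ℤ := ((List.range' 1 k).map eps).prod

lemma sfun_succ (k : ℕ) : sfun (k + 1) = sfun k * epsAux (k + 1) := by
  unfold sfun; rw [List.range_succ]; simp

lemma Sp_succ (k : ℕ) : Sp (k + 1) = Sp k * eps (1 + k) := by
  unfold Sp; rw [List.range'_1_concat]; simp

lemma Sp_sfun (i : ℕ) : Sp (2 * i + 1) = sfun (i + 1) ∧ Sp (2 * i + 2) = sfun (i + 1) := by
  induction i with
  | zero =>
    have h1 : Sp 1 = eps 1 := by unfold Sp; norm_num [List.range']
    have h2 : eps 1 = epsAux 1 := by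
      have := eps_odd 0; norm_num at this; exact this
    have h3 : sfun 1 = epsAux 1 := by
      have := sfun_succ 0
      have h0 : sfun 0 = 1 := by unfold sfun; simp
      rw [this, h0, one_mul]
    constructor
    · simpa [h1, h3] using h2
    · have h4 : Sp 2 = Sp 1 * eps 2 := by have := Sp_succ 1; norm_num at this; exact this
      have h5 : eps 2 = 1 := by have := eps_even 1; norm_num at this; exact this
      simp [h4, h5, h1, h2, h3]
  | succ i ih =>
    obtain ⟨ih1, ih2⟩ := ih
    have k1 : Sp (2 * (i + 1) + 1) = Sp (2 * i + 2) * eps (2 * (i + 1) + 1) := by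
      have := Sp_succ (2 * i + 2)
      have hc : 1 + (2 * i + 2) = 2 * (i + 1) + 1 := by ring
      have hc2 : 2 * i + 2 + 1 = 2 * (i + 1) + 1 := by ring
      rw [hc, hc2] at this; exact this
    have k2 : Sp (2 * (i + 1) + 1) = sfun (i + 2) := by
      rw [k1, ih2, eps_odd (i + 1), ← sfun_succ (i + 1)]
    refine ⟨k2, ?_⟩
    have k3 : Sp (2 * (i + 1) + 2) = Sp (2 * (i + 1) + 1) * eps (2 * (i + 2)) := by
      have := Sp_succ (2 * (i + 1) + 1)
      have hc : 1 + (2 * (i + 1) + 1) = 2 * (i + 2) := by ring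
      have hc2 : 2 * (i + 1) + 1 + 1 = 2 * (i + 1) + 2 := by ring
      rw [hc, hc2] at this; exact this
    rw [k3, k2, eps_even, mul_one]

lemma joint (n : ℕ) (hn : 1 ≤ n) : sfun (2 * n) = -epsAux n ∧ sfun (2 * n + 1) = -1 := by
  induction n, hn using Nat.le_induction with
  | base =>
    have h2 : sfun 2 = -1 := by
      have a1 := sfun_succ 1
      have a0 := sfun_succ 0
      have : sfun 0 = 1 := by unfold sfun; simp
      rw [this, one_mul] at a0
      norm_num at a0 a1
      rw [a1, a0, epsAux_one, epsAux_two]; norm_num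
    constructor
    · rw [show 2 * 1 = 2 from rfl, h2, epsAux_one]
    · have a2 := sfun_succ 2
      rw [show 2 * 1 + 1 = 3 from rfl, a2, h2, epsAux_three]; norm_num
  | succ n hn ih =>
    obtain ⟨ih1, ih2⟩ := ih
    have k1 : sfun (2 * (n + 1)) = -epsAux (n + 1) := by
      have := sfun_succ (2 * n + 1)
      have hc : 2 * n + 1 + 1 = 2 * (n + 1) := by ring
      rw [hc] at this
      rw [this, ih2, epsAux_even (n + 1) (by omega)]; ring
    refine ⟨k1, ?_⟩
    have := sfun_succ (2 * (n + 1))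
    rw [this, k1, epsAux_odd (n + 1) (by omega)]
    have := epsAux_sq (n + 1)
    nlinarith [epsAux_sq (n + 1)]

lemma signS (i : ℕ) (hi : 1 ≤ i) : Sp (2 * i + 1) = -eps i := by
  rcases Nat.even_or_odd i with ⟨n, hn⟩ | ⟨n, hn⟩
  · have hn' : i = 2 * n := by omega
    subst hn'
    have h1 := (Sp_sfun (2 * n)).1
    have h2 := (joint n (by omega)).2
    have hc : 2 * n + 1 = 2 * n + 1 := rfl
    rw [h1, show 2 * n + 1 = 2 * n + 1 from rfl] at *
    rw [eps_even]
    have : sfun (2 * n + 1) = -1 := h2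
    omega
  · subst hn
    have h1 := (Sp_sfun (2 * n + 1)).1
    have h2 := (joint (n + 1) (by omega)).1
    have hc : 2 * n + 1 + 1 = 2 * (n + 1) := by ring
    rw [h1, eps_odd n, hc, h2]

open ExteriorAlgebra

section AuxAlg
variable {R : Type*} {M : Type*} [CommRing R] [AddCommGroup M] [Module R M]

lemma aux_anticomm (x y : M) : ι R x * ι R y = -(ι R y * ι R x) :=
  eq_neg_of_add_eq_zero_left (ι_add_mul_swap x y)

lemma aux_move (l : List M) (v : M) :
    ι R v * (l.map (ι R)).prod = ((-1:ℤ)^l.length) • ((l.map (ι R)).prod * ι R v) := by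
  induction l with
  | nil => simp
  | cons a t ih =>
    simp only [List.map_cons, List.prod_cons, List.length_cons]
    rw [← mul_assoc, aux_anticomm v a, neg_mul, mul_assoc, ih, mul_smul_comm]
    rw [pow_succ, mul_comm ((-1:ℤ)^t.length), mul_smul, neg_one_zsmul, mul_assoc]

lemma aux_left (l : List M) (v : M) (hv : v ∈ l) : ι R v * (l.map (ι R)).prod = 0 := by
  induction l with
  | nil => simp at hv
  | cons a t ih =>
    simp only [List.map_cons, List.prod_cons]
    rcases List.mem_cons.mp hv with rfl | hm
    · rw [← mul_assoc, ι_sq_zero, zero_mul]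
    · rw [← mul_assoc, aux_anticomm v a, neg_mul, mul_assoc, ih hm, mul_zero, neg_zero]

lemma aux_right (l : List M) (v : M) (hv : v ∈ l) : (l.map (ι R)).prod * ι R v = 0 := by
  induction l with
  | nil => simp at hv
  | cons a t ih =>
    simp only [List.map_cons, List.prod_cons]
    rcases List.mem_cons.mp hv with rfl | hm
    · rw [aux_move t v, smul_mul_assoc, mul_assoc, ι_sq_zero, mul_zero, smul_zero]
    · rw [mul_assoc, ih hm, mul_zero]

lemma aux_both (l1 l2 : List M) (v : M) (h1 : v ∈ l1) (h2 : v ∈ l2) :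
    (l1.map (ι R)).prod * (l2.map (ι R)).prod = 0 := by
  induction l1 with
  | nil => simp at h1
  | cons a t ih =>
    simp only [List.map_cons, List.prod_cons]
    rcases List.mem_cons.mp h1 with rfl | hm
    · rw [aux_move t v, smul_mul_assoc, mul_assoc, aux_left l2 v h2, mul_zero, smul_zero]
    · rw [mul_assoc, ih hm, mul_zero]

end AuxAlg

section Spec
variable (F : Type) [Field F]

noncomputable def vec (j : ℕ) : ({n : ℕ // 1 ≤ n} →₀ F) :=
  if h : 1 ≤ j then Finsupp.single ⟨j, h⟩ 1 else 0

lemma e_eq (j : ℕ) : e F j = ι F (vec F j) := by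
  unfold e vec; split <;> simp

lemma map_e_eq (l : List ℕ) : l.map (e F) = (l.map (vec F)).map (ι F) := by
  rw [List.map_map]
  exact List.map_congr_left (fun a _ => e_eq F a)

noncomputable def gens (k : ℕ) : E F := ((List.range' 1 k).map (e F)).prod

lemma mem_vec_map (j k : ℕ) (h1 : 1 ≤ j) (h2 : j ≤ k) :
    vec F j ∈ (List.range' 1 k).map (vec F) :=
  List.mem_map_of_mem (by rw [List.mem_range'_1]; omega)

lemma gens_mul_gens (k m : ℕ) (hk : 1 ≤ k) (hm : 1 ≤ m) :
    gens F k * gens F m = 0 := by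
  unfold gens
  rw [map_e_eq, map_e_eq]
  exact aux_both _ _ (vec F 1) (mem_vec_map F 1 k le_rfl hk) (mem_vec_map F 1 m le_rfl hm)

lemma e_mul_gens (k : ℕ) (hk : 1 ≤ k) : e F 1 * gens F k = 0 := by
  unfold gens
  rw [map_e_eq, e_eq]
  exact aux_left _ _ (mem_vec_map F 1 k le_rfl hk)

lemma gens_mul_e (j k : ℕ) (h1 : 1 ≤ j) (h2 : j ≤ k) : gens F k * e F j = 0 := by
  unfold gens
  rw [map_e_eq, e_eq]
  exact aux_right _ _ (mem_vec_map F j k h1 h2)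

lemma w_eq_gens (n : ℕ) : w F n = gens F (2 * n + 1) := rfl

-- main induction, with an abstract sign function s : ℕ → ℤ
lemma claimC (s : ℕ → ℤ) (k : ℕ) (hk : 2 ≤ k) :
    ((List.range' 1 k).map (fun j => s j • e F j + w F j)).prod
      = (((List.range' 1 k).map s).prod) • gens F k := by
  induction k, hk using Nat.le_induction with
  | base =>
    have h2 : List.range' 1 2 = [1, 2] := rfl
    have z1 : e F 1 * w F 2 = 0 := by
      rw [w_eq_gens]; exact e_mul_gens F _ (by norm_num)
    have z2 : w F 1 * e F 2 = 0 := by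
      rw [w_eq_gens]; exact gens_mul_e F 2 _ (by norm_num) (by norm_num)
    have z3 : w F 1 * w F 2 = 0 := by
      rw [w_eq_gens, w_eq_gens]; exact gens_mul_gens F _ _ (by norm_num) (by norm_num)
    unfold gens
    rw [h2]
    simp only [List.map_cons, List.map_nil, List.prod_cons, List.prod_nil, mul_one]
    rw [mul_add, add_mul, add_mul]
    simp only [smul_mul_assoc, mul_smul_comm, smul_smul, z1, z2, z3, smul_zero, add_zero, zero_add, Int.mul_comm (s 2) (s 1)]
  | succ k hk ih =>
    have hz : gens F k * w F (1 + k) = 0 := by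
      rw [w_eq_gens]; exact gens_mul_gens F _ _ (by omega) (by omega)
    have hg : gens F (k + 1) = gens F k * e F (1 + k) := by
      unfold gens
      rw [List.range'_1_concat]
      simp
    rw [List.range'_1_concat]
    simp only [List.map_append, List.prod_append, List.map_cons, List.map_nil,
      List.prod_cons, List.prod_nil, mul_one]
    rw [ih, hg, mul_add, smul_mul_assoc, mul_smul_comm, smul_mul_assoc, hz, smul_zero,
      add_zero, smul_smul]
end Spec

/-- if `φ : E → E` is the `F`-algebra endomorphism determined by
`φ (e i) = ε i • e i + w i` for all `i ≥ 1`, then `φ ∘ φ = id`; in particular `φ` is an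
`F`-algebra automorphism of `E` of order two. -/
theorem stmt6 (F : Type) [Field F] (hchar : (2 : F) ≠ 0)
    (φ : E F →ₐ[F] E F) (hφ : ∀ i : ℕ, 1 ≤ i → φ (e F i) = eps i • e F i + w F i) :
    φ.comp φ = AlgHom.id F (E F) := by
  have key : ∀ i : ℕ, 1 ≤ i → φ (φ (e F i)) = e F i := by
    intro i hi
    have hprod : φ (w F i)
        = ((List.range' 1 (2 * i + 1)).map (fun j => eps j • e F j + w F j)).prod := by
      unfold w
      rw [map_list_prod, List.map_map]
      congr 1
      refine List.map_congr_left (fun j hj => ?_)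
      have h1j : 1 ≤ j := by rw [List.mem_range'_1] at hj; omega
      exact hφ j h1j
    have hw : φ (w F i) = (-eps i) • w F i := by
      rw [hprod, claimC F eps (2 * i + 1) (by omega),
        show ((List.range' 1 (2 * i + 1)).map eps).prod = Sp (2 * i + 1) from rfl,
        signS i hi, ← w_eq_gens]
    rw [hφ i hi, map_add, map_zsmul, hφ i hi, hw, smul_add, smul_smul, eps_sq i, one_smul,
      neg_smul]
    abel
  apply ExteriorAlgebra.hom_ext
  apply Finsupp.lhom_ext
  intro a b
  have hb : (Finsupp.single a b) = b • Finsupp.single a 1 := by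
    rw [Finsupp.smul_single, smul_eq_mul, mul_one]
  simp only [LinearMap.coe_comp, Function.comp_apply, AlgHom.toLinearMap_apply,
    AlgHom.comp_apply, AlgHom.coe_id, id_eq, AlgHom.id_apply]
  simp only [hb, map_smul]
  congr 1
  have he : e F a.1 = ExteriorAlgebra.ι F (Finsupp.single a 1) := by
    unfold e; rw [dif_pos a.2]
  rw [← he]
  exact key a.1 a.2
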